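/- arXiv:2311.13788 — 3 statements merged into one kernel-verified Lean document; each statement's English description precedes it below -/
import Mathlib

section
/- Let c₁, c₂ ∈ ℕ and write c₀ = gcd(c₁, c₂), c_{1,0} = gcd(c₁/c₀, c₀^∞), c_{2,0} = gcd(c₂/c₀, c₀^∞), c₁ = c₀ c_{1,0} c₁', c₂ = c₀ c_{2,0} c₂'. Then gcd(c₁', c₂') = 1 and gcd(c₁' c₂', c₀) = 1. -/
/-- `infPart n a = gcd(n, a^∞)`, the largest divisor of `n` all of whose prime
factors divide `a`. -/
def infPart (n a : ℕ) : ℕ :=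
  ∏ p ∈ n.primeFactors.filter (fun p => p ∣ a), p ^ n.factorization p


lemma infPart_dvd (n a : ℕ) (hn : n ≠ 0) : infPart n a ∣ n := by
  conv_rhs => rw [← Nat.factorization_prod_pow_eq_self hn]
  rw [Nat.prod_factorization_eq_prod_primeFactors]
  exact Finset.prod_dvd_prod_of_subset _ _ _ (Finset.filter_subset _ _)

lemma coprime_div_infPart (n a : ℕ) (hn : n ≠ 0) : Nat.Coprime (n / infPart n a) a := by
  by_contra h
  obtain ⟨p, pp, hpd⟩ := Nat.exists_prime_and_dvd h
  have hpq : p ∣ n / infPart n a := hpd.trans (Nat.gcd_dvd_left _ _)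
  have hpa : p ∣ a := hpd.trans (Nat.gcd_dvd_right _ _)
  have hdvd := infPart_dvd n a hn
  have hpn : p ∣ n := hpq.trans (Nat.div_dvd_of_dvd hdvd)
  have hmem : p ∈ n.primeFactors.filter (fun p => p ∣ a) := by
    simp [Nat.mem_primeFactors, pp, hpn, hn, hpa]
  have h1 : p ^ n.factorization p ∣ infPart n a :=
    Finset.dvd_prod_of_mem _ hmem
  have hne : infPart n a ≠ 0 := fun h0 => hn (by simpa [h0] using hdvd)
  have heq : n / infPart n a * infPart n a = n := Nat.div_mul_cancel hdvd
  have hq0 : n / infPart n a ≠ 0 := fun h0 => hn (by rw [← heq, h0, zero_mul])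
  have := Nat.factorization_mul hq0 hne
  have hfac : n.factorization p = (n / infPart n a).factorization p + (infPart n a).factorization p := by
    nth_rewrite 1 [← heq]
    rw [this, Finsupp.add_apply]
  have h2 : n.factorization p ≤ (infPart n a).factorization p :=
    (Nat.Prime.pow_dvd_iff_le_factorization pp hne).mp h1
  have h3 : (n / infPart n a).factorization p = 0 := by omega
  have := (Nat.Prime.dvd_iff_one_le_factorization pp hq0).mp hpq
  omega


/-- With `c₀ = gcd(c₁, c₂)`, `c_{1,0} = gcd(c₁/c₀, c₀^∞)`, `c_{2,0} = gcd(c₂/c₀, c₀^∞)`,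
`c₁ = c₀ c_{1,0} c₁'`, `c₂ = c₀ c_{2,0} c₂'`, one has
`gcd(c₁', c₂') = 1` and `gcd(c₁' c₂', c₀) = 1`. -/
theorem stmt_4 (c₁ c₂ c₀ c10 c20 c₁' c₂' : ℕ) (h₁ : 0 < c₁) (h₂ : 0 < c₂)
    (hc₀ : c₀ = Nat.gcd c₁ c₂)
    (h10 : c10 = infPart (c₁ / c₀) c₀) (h20 : c20 = infPart (c₂ / c₀) c₀)
    (e₁ : c₁ = c₀ * c10 * c₁') (e₂ : c₂ = c₀ * c20 * c₂') :
    Nat.Coprime c₁' c₂' ∧ Nat.Coprime (c₁' * c₂') c₀ := by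
  have hc0pos : 0 < c₀ := hc₀ ▸ Nat.gcd_pos_of_pos_left _ h₁
  have hd1 : c₀ ∣ c₁ := hc₀ ▸ Nat.gcd_dvd_left _ _
  have hd2 : c₀ ∣ c₂ := hc₀ ▸ Nat.gcd_dvd_right _ _
  set n₁ := c₁ / c₀ with hn₁
  set n₂ := c₂ / c₀ with hn₂
  have hn₁0 : n₁ ≠ 0 := Nat.ne_of_gt (Nat.div_pos (Nat.le_of_dvd h₁ hd1) hc0pos)
  have hn₂0 : n₂ ≠ 0 := Nat.ne_of_gt (Nat.div_pos (Nat.le_of_dvd h₂ hd2) hc0pos)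
  have he₁ : n₁ = c10 * c₁' := by
    rw [hn₁, e₁, mul_assoc, Nat.mul_div_cancel_left _ hc0pos]
  have he₂ : n₂ = c20 * c₂' := by
    rw [hn₂, e₂, mul_assoc, Nat.mul_div_cancel_left _ hc0pos]
  have hcop : Nat.Coprime n₁ n₂ := by
    rw [hn₁, hn₂, hc₀]
    exact Nat.coprime_div_gcd_div_gcd (hc₀ ▸ hc0pos)
  have hq1 : c₁' = n₁ / c10 := by
    rw [he₁, Nat.mul_div_cancel_left]
    rcases Nat.eq_zero_or_pos c10 with h | h
    · exfalso; apply hn₁0; rw [he₁, h, zero_mul]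
    · exact h
  have hq2 : c₂' = n₂ / c20 := by
    rw [he₂, Nat.mul_div_cancel_left]
    rcases Nat.eq_zero_or_pos c20 with h | h
    · exfalso; apply hn₂0; rw [he₂, h, zero_mul]
    · exact h
  have hcop1 : Nat.Coprime c₁' c₀ := by
    rw [hq1, h10]; exact coprime_div_infPart n₁ c₀ hn₁0
  have hcop2 : Nat.Coprime c₂' c₀ := by
    rw [hq2, h20]; exact coprime_div_infPart n₂ c₀ hn₂0
  refine ⟨?_, hcop1.mul hcop2⟩
  exact Nat.Coprime.coprime_dvd_left ⟨c10, by linarith [he₁]⟩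
    (Nat.Coprime.coprime_dvd_right ⟨c20, by linarith [he₂]⟩ hcop)
end

section
/- Let c₁ = c₀ c_{1,0} c₁' and c₂ = c₀ c_{2,0} c₂' with c₀ = gcd(c₁,c₂), c_{1,0} and c_{2,0} the c₀-parts of c₁/c₀ and c₂/c₀ respectively, and gcd(c₁', c₂') = gcd(c₁'c₂', c₀) = 1. Then for integers α₁ coprime to c₁, α₂ coprime to c₂, and m ∈ ℤ, the congruence α₁ c₂ + α₂ c₁ ≡ m (mod c₁ c₂) holds if and only if all of the following hold: c₀ ∣ m; α₁ c_{2,0} c₂' + α₂ c_{1,0} c₁' ≡ m/c₀ (mod c₀ c_{1,0} c_{2,0}); α₁ ≡ m \overline{c₂} (mod c₁'); and α₂ ≡ m \overline{c₁} (mod c₂'), where \overline{c₂} is the inverse of c₂ mod c₁' and \overline{c₁} the inverse of c₁ mod c₂'. -/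
lemma infPart_coprime {x a : ℕ} (n : ℕ) (h : Nat.Coprime x a) :
    Nat.Coprime x (infPart n a) := by
  apply Nat.Coprime.prod_right
  intro p hp
  simp only [Finset.mem_filter] at hp
  exact (Nat.Coprime.coprime_dvd_right hp.2 h).pow_right _

lemma infPart_decomp {n : ℕ} (a : ℕ) (hn : n ≠ 0) :
    ∃ r, n = infPart n a * r ∧ Nat.Coprime r a := by
  refine ⟨∏ p ∈ n.primeFactors.filter (fun p => ¬ p ∣ a), p ^ n.factorization p, ?_, ?_⟩
  · rw [infPart, Finset.prod_filter_mul_prod_filter_not]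
    exact (Nat.factorization_prod_pow_eq_self hn).symm
  · apply Nat.Coprime.prod_left
    intro p hp
    simp only [Finset.mem_filter] at hp
    exact Nat.Coprime.pow_left _
      ((Nat.Prime.coprime_iff_not_dvd (Nat.prime_of_mem_primeFactors hp.1)).2 hp.2)

lemma cancel_modEq {c B X m : ℤ} (hc : c ≠ 0) :
    (c * X ≡ m [ZMOD c * B]) ↔ (c ∣ m ∧ X ≡ m / c [ZMOD B]) := by
  rw [Int.modEq_iff_dvd]
  constructor
  · intro h
    have h1 : c ∣ m - c * X := (dvd_mul_right c B).trans h
    have hcm : c ∣ m := by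
      have h2 : m = (m - c * X) + c * X := by ring
      rw [h2]; exact dvd_add h1 ⟨X, rfl⟩
    obtain ⟨k, hk⟩ := hcm
    refine ⟨⟨k, hk⟩, ?_⟩
    rw [Int.modEq_iff_dvd, hk, Int.mul_ediv_cancel_left _ hc]
    have h3 : m - c * X = c * (k - X) := by rw [hk]; ring
    rw [h3] at h
    exact (mul_dvd_mul_iff_left hc).mp h
  · rintro ⟨⟨k, hk⟩, hX⟩
    subst hk
    rw [Int.mul_ediv_cancel_left _ hc, Int.modEq_iff_dvd] at hX
    have h3 : c * k - c * X = c * (k - X) := by ring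
    rw [h3]
    exact mul_dvd_mul_left c hX

lemma inv_shift {n c d a m : ℤ} (hinv : c * d ≡ 1 [ZMOD n]) :
    (a * c ≡ m [ZMOD n]) ↔ (a ≡ m * d [ZMOD n]) := by
  constructor
  · intro h
    have h1 := h.mul_right d
    have h2 := hinv.mul_left a
    rw [mul_one] at h2
    rw [mul_assoc] at h1
    exact h2.symm.trans h1
  · intro h
    have h1 := h.mul_right c
    have h2 := hinv.mul_left m
    rw [mul_one] at h2
    have h3 : m * d * c = m * (c * d) := by ring
    rw [h3] at h1
    exact h1.trans h2

/-- With `c₁ = c₀ c_{1,0} c₁'`, `c₂ = c₀ c_{2,0} c₂'` (where `c₀ = gcd(c₁,c₂)` and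
`c_{i,0}` are the `c₀`-parts of `cᵢ/c₀`), for `α₁` coprime to `c₁`, `α₂` coprime to
`c₂`, and `m ∈ ℤ`: `α₁c₂ + α₂c₁ ≡ m (mod c₁c₂)` iff `c₀ ∣ m`,
`α₁ c_{2,0} c₂' + α₂ c_{1,0} c₁' ≡ m/c₀ (mod c₀ c_{1,0} c_{2,0})`,
`α₁ ≡ m c̄₂ (mod c₁')` and `α₂ ≡ m c̄₁ (mod c₂')`. -/
theorem stmt_5 (c₁ c₂ c₀ c10 c20 c₁' c₂' : ℕ) (h₁ : 0 < c₁) (h₂ : 0 < c₂)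
    (hc₀ : c₀ = Nat.gcd c₁ c₂)
    (h10 : c10 = infPart (c₁ / c₀) c₀) (h20 : c20 = infPart (c₂ / c₀) c₀)
    (e₁ : c₁ = c₀ * c10 * c₁') (e₂ : c₂ = c₀ * c20 * c₂')
    (α₁ α₂ m d₁ d₂ : ℤ)
    (hα₁ : IsCoprime α₁ (c₁ : ℤ)) (hα₂ : IsCoprime α₂ (c₂ : ℤ))
    (hd₂ : (c₂ : ℤ) * d₂ ≡ 1 [ZMOD (c₁' : ℤ)]) (hd₁ : (c₁ : ℤ) * d₁ ≡ 1 [ZMOD (c₂' : ℤ)]) :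
    (α₁ * c₂ + α₂ * c₁ ≡ m [ZMOD ((c₁ : ℤ) * c₂)]) ↔
      ((c₀ : ℤ) ∣ m ∧
        (α₁ * c20 * c₂' + α₂ * c10 * c₁' ≡ m / c₀ [ZMOD ((c₀ : ℤ) * c10 * c20)]) ∧
        (α₁ ≡ m * d₂ [ZMOD (c₁' : ℤ)]) ∧ (α₂ ≡ m * d₁ [ZMOD (c₂' : ℤ)])) := by
  -- positivity and basic divisibility
  have hc0pos : 0 < c₀ := hc₀ ▸ Nat.gcd_pos_of_pos_left _ h₁
  have hdvd1 : c₀ ∣ c₁ := hc₀ ▸ Nat.gcd_dvd_left _ _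
  have hdvd2 : c₀ ∣ c₂ := hc₀ ▸ Nat.gcd_dvd_right _ _
  have h10pos : 0 < c10 := Nat.pos_of_dvd_of_pos ⟨c₀ * c₁', by rw [e₁]; ring⟩ h₁
  have h20pos : 0 < c20 := Nat.pos_of_dvd_of_pos ⟨c₀ * c₂', by rw [e₂]; ring⟩ h₂
  have hq1 : c₁ / c₀ ≠ 0 := (Nat.div_pos (Nat.le_of_dvd h₁ hdvd1) hc0pos).ne'
  have hq2 : c₂ / c₀ ≠ 0 := (Nat.div_pos (Nat.le_of_dvd h₂ hdvd2) hc0pos).ne'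
  obtain ⟨r₁, hr₁, hcor₁⟩ := infPart_decomp (n := c₁ / c₀) c₀ hq1
  obtain ⟨r₂, hr₂, hcor₂⟩ := infPart_decomp (n := c₂ / c₀) c₀ hq2
  -- identify c₁' = r₁ and c₂' = r₂
  have hh1 : c₀ * (c10 * r₁) = c₁ := by
    have h := Nat.mul_div_cancel' hdvd1
    rw [hr₁, ← h10] at h
    exact h
  have hh2 : c₀ * (c20 * r₂) = c₂ := by
    have h := Nat.mul_div_cancel' hdvd2
    rw [hr₂, ← h20] at h
    exact h
  have he1 : c₁' = r₁ := by
    have h2 : c₀ * (c10 * c₁') = c₀ * (c10 * r₁) := by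
      rw [← mul_assoc, ← e₁]; exact hh1.symm
    exact Nat.eq_of_mul_eq_mul_left h10pos (Nat.eq_of_mul_eq_mul_left hc0pos h2)
  have he2 : c₂' = r₂ := by
    have h2 : c₀ * (c20 * c₂') = c₀ * (c20 * r₂) := by
      rw [← mul_assoc, ← e₂]; exact hh2.symm
    exact Nat.eq_of_mul_eq_mul_left h20pos (Nat.eq_of_mul_eq_mul_left hc0pos h2)
  -- coprimality facts
  have hco1 : Nat.Coprime c₁' c₀ := he1 ▸ hcor₁
  have hco2 : Nat.Coprime c₂' c₀ := he2 ▸ hcor₂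
  have hco1_10 : Nat.Coprime c₁' c10 := h10 ▸ infPart_coprime _ hco1
  have hco1_20 : Nat.Coprime c₁' c20 := h20 ▸ infPart_coprime _ hco1
  have hco2_10 : Nat.Coprime c₂' c10 := h10 ▸ infPart_coprime _ hco2
  have hco2_20 : Nat.Coprime c₂' c20 := h20 ▸ infPart_coprime _ hco2
  have hco12 : Nat.Coprime c₁' c₂' := by
    have h := Nat.coprime_div_gcd_div_gcd (hc₀ ▸ hc0pos : 0 < Nat.gcd c₁ c₂)
    rw [← hc₀] at h
    have hd1' : c₁' ∣ c₁ / c₀ := by rw [hr₁, ← h10, he1]; exact dvd_mul_left r₁ c10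
    have hd2' : c₂' ∣ c₂ / c₀ := by rw [hr₂, ← h20, he2]; exact dvd_mul_left r₂ c20
    exact Nat.Coprime.coprime_dvd_left hd1' (Nat.Coprime.coprime_dvd_right hd2' h)
  -- move to ℤ
  have hc0z : (c₀ : ℤ) ≠ 0 := by exact_mod_cast hc0pos.ne'
  have hN : (c₁ : ℤ) * (c₂ : ℤ)
      = (c₀ : ℤ) * ((c₀ : ℤ) * c10 * c20) * (c₁' : ℤ) * (c₂' : ℤ) := by
    rw [e₁, e₂]; push_cast; ring
  have hnA2 : ((c₀ : ℤ) * ((c₀ : ℤ) * c10 * c20) * (c₁' : ℤ)).natAbs.Coprime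
      ((c₂' : ℤ)).natAbs := by
    simp only [Int.natAbs_mul, Int.natAbs_natCast, Nat.coprime_mul_iff_left]
    exact ⟨⟨hco2.symm, ⟨⟨hco2.symm, hco2_10.symm⟩, hco2_20.symm⟩⟩, hco12⟩
  have hnA1 : ((c₀ : ℤ) * ((c₀ : ℤ) * c10 * c20)).natAbs.Coprime ((c₁' : ℤ)).natAbs := by
    simp only [Int.natAbs_mul, Int.natAbs_natCast, Nat.coprime_mul_iff_left]
    exact ⟨hco1.symm, ⟨⟨hco1.symm, hco1_10.symm⟩, hco1_20.symm⟩⟩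
  rw [hN, ← Int.modEq_and_modEq_iff_modEq_mul hnA2, ← Int.modEq_and_modEq_iff_modEq_mul hnA1]
  -- the three component equivalences
  have hx : α₁ * (c₂ : ℤ) + α₂ * (c₁ : ℤ)
      = (c₀ : ℤ) * (α₁ * c20 * c₂' + α₂ * c10 * c₁') := by
    rw [e₁, e₂]; push_cast; ring
  have iffA : (α₁ * (c₂ : ℤ) + α₂ * (c₁ : ℤ) ≡ m [ZMOD (c₀ : ℤ) * ((c₀ : ℤ) * c10 * c20)]) ↔
      ((c₀ : ℤ) ∣ m ∧
        (α₁ * c20 * c₂' + α₂ * c10 * c₁' ≡ m / c₀ [ZMOD (c₀ : ℤ) * c10 * c20])) := by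
    rw [hx]; exact cancel_modEq hc0z
  have hdc1 : (c₁' : ℤ) ∣ (c₁ : ℤ) :=
    Int.natCast_dvd_natCast.mpr ⟨c₀ * c10, by rw [e₁]; ring⟩
  have hdc2 : (c₂' : ℤ) ∣ (c₂ : ℤ) :=
    Int.natCast_dvd_natCast.mpr ⟨c₀ * c20, by rw [e₂]; ring⟩
  have hz1 : α₂ * (c₁ : ℤ) ≡ 0 [ZMOD (c₁' : ℤ)] :=
    Int.modEq_zero_iff_dvd.mpr (hdc1.mul_left α₂)
  have hz2 : α₁ * (c₂ : ℤ) ≡ 0 [ZMOD (c₂' : ℤ)] :=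
    Int.modEq_zero_iff_dvd.mpr (hdc2.mul_left α₁)
  have iff1 : (α₁ * (c₂ : ℤ) + α₂ * (c₁ : ℤ) ≡ m [ZMOD (c₁' : ℤ)]) ↔
      (α₁ ≡ m * d₂ [ZMOD (c₁' : ℤ)]) := by
    have hsplit : α₁ * (c₂ : ℤ) + α₂ * (c₁ : ℤ) ≡ α₁ * (c₂ : ℤ) [ZMOD (c₁' : ℤ)] := by
      have h := (Int.ModEq.refl (α₁ * (c₂ : ℤ))).add hz1
      simpa using h
    constructor
    · intro h
      exact (inv_shift hd₂).mp (hsplit.symm.trans h)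
    · intro h
      exact hsplit.trans ((inv_shift hd₂).mpr h)
  have iff2 : (α₁ * (c₂ : ℤ) + α₂ * (c₁ : ℤ) ≡ m [ZMOD (c₂' : ℤ)]) ↔
      (α₂ ≡ m * d₁ [ZMOD (c₂' : ℤ)]) := by
    have hsplit : α₁ * (c₂ : ℤ) + α₂ * (c₁ : ℤ) ≡ α₂ * (c₁ : ℤ) [ZMOD (c₂' : ℤ)] := by
      have h := hz2.add (Int.ModEq.refl (α₂ * (c₁ : ℤ)))
      simpa using h
    constructor
    · intro h
      exact (inv_shift hd₁).mp (hsplit.symm.trans h)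
    · intro h
      exact hsplit.trans ((inv_shift hd₁).mpr h)
  rw [iffA, iff1, iff2]
  tauto
end

section
/- Recursive character-sum bound, inductive step: let p be prime, p ∤ uv, and define 𝒞_{k+1}(A, B) = ∑*_{γ mod p} 𝒞_k(γ, A) 𝒞_k(γ, B). If |𝒞_k(γ, A)| ≤ c_k p^{2^{k-1} - 1/2} √gcd(p, γ - A) for all γ, A coprime to p (with constant c_k), then |𝒞_{k+1}(A, B)| ≤ c_k² p^{2^k} for all A, B coprime to p; in particular, when p ∣ A - B this matches the bound c_k² p^{2^k - 1/2} √gcd(p, A - B). -/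
lemma aux_gcd_le_ite (p : ℕ) (hp : p.Prime) [NeZero p] (A : ℤ) (γ : (ZMod p)ˣ) :
    ((Int.gcd (p : ℤ) (((γ : ZMod p).val : ℤ) - A)) : ℝ) ≤
      if ((γ : ZMod p) = (A : ZMod p)) then (p : ℝ) else 1 := by
  set x : ℤ := ((γ : ZMod p).val : ℤ) - A with hx
  have hdvd : Int.gcd (p : ℤ) x ∣ p := by
    have := Nat.gcd_dvd_left (p : ℤ).natAbs x.natAbs
    simpa [Int.gcd] using this
  split_ifs with hc
  · exact_mod_cast Nat.cast_le.mpr (Nat.le_of_dvd hp.pos hdvd)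
  · have h1 : Int.gcd (p : ℤ) x = 1 := by
      rcases (Nat.Prime.eq_one_or_self_of_dvd hp _ hdvd) with h1 | h1
      · exact h1
      · exfalso
        have hpd : (p : ℤ) ∣ x := by
          have h2 : ((Int.gcd (p : ℤ) x : ℤ)) ∣ x := Int.gcd_dvd_right _ _
          rw [h1] at h2
          exact_mod_cast h2
        apply hc
        have h3 : ((x : ℤ) : ZMod p) = 0 := (ZMod.intCast_zmod_eq_zero_iff_dvd x p).mpr hpd
        have hcast : (((γ : ZMod p).val : ℤ) : ZMod p) = (γ : ZMod p) := by
          push_cast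
          exact ZMod.natCast_rightInverse (γ : ZMod p)
        rw [hx, Int.cast_sub, hcast, sub_eq_zero] at h3
        exact h3
    rw [h1]
    norm_num

lemma aux_sum_gcd_le (p : ℕ) (hp : p.Prime) [NeZero p] (A : ℤ) :
    ∑ γ : (ZMod p)ˣ, ((Int.gcd (p : ℤ) (((γ : ZMod p).val : ℤ) - A)) : ℝ) ≤ 2 * p := by
  have hcard : (Fintype.card (ZMod p)ˣ : ℝ) ≤ (p : ℝ) := by
    have := Fintype.card_le_of_injective (fun γ : (ZMod p)ˣ => (γ : ZMod p)) (fun _ _ h => Units.ext h)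
    rw [ZMod.card p] at this
    exact_mod_cast this
  have hfil : (Finset.univ.filter (fun γ : (ZMod p)ˣ => (γ : ZMod p) = (A : ZMod p))).card ≤ 1 := by
    apply Finset.card_le_one.mpr
    intro a ha b hb
    simp only [Finset.mem_filter] at ha hb
    exact Units.ext (ha.2.trans hb.2.symm)
  have hp1 : (1 : ℝ) ≤ (p : ℝ) := by exact_mod_cast hp.one_lt.le
  calc ∑ γ : (ZMod p)ˣ, ((Int.gcd (p : ℤ) (((γ : ZMod p).val : ℤ) - A)) : ℝ)
      ≤ ∑ γ : (ZMod p)ˣ, (if ((γ : ZMod p) = (A : ZMod p)) then (p : ℝ) else 1) :=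
        Finset.sum_le_sum fun γ _ => aux_gcd_le_ite p hp A γ
    _ ≤ ∑ γ : (ZMod p)ˣ, ((1 : ℝ) + if ((γ : ZMod p) = (A : ZMod p)) then (p : ℝ) else 0) := by
        apply Finset.sum_le_sum
        intro γ _
        split_ifs <;> simp
    _ = (Fintype.card (ZMod p)ˣ : ℝ)
        + ∑ γ ∈ Finset.univ.filter (fun γ : (ZMod p)ˣ => (γ : ZMod p) = (A : ZMod p)), (p : ℝ) := by
        rw [Finset.sum_add_distrib, Finset.sum_const, ← Finset.sum_filter]
        simp [Finset.card_univ]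
    _ ≤ (p : ℝ) + 1 * (p : ℝ) := by
        rw [Finset.sum_const, nsmul_eq_mul]
        gcongr
        exact_mod_cast hfil
    _ ≤ 2 * p := by linarith

/-- Inductive step of the recursive character-sum bound: let `p` be prime and
suppose `|𝒞_k(γ, A)| ≤ c_k p^{2^{k-1} - 1/2} √gcd(p, γ − A)` for all `γ, A`
coprime to `p`. Then for `A, B` coprime to `p`,
`|𝒞_{k+1}(A, B)| = |∑*_{γ mod p} 𝒞_k(γ, A) 𝒞_k(γ, B)| ≤ 2 c_k² p^{2^k}`. -/
theorem stmt_13 (p : ℕ) (hp : p.Prime) [NeZero p] (k : ℕ) (hk : 1 ≤ k)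
    (Ck : ℤ → ℤ → ℂ) (ck : ℝ) (hck : 0 ≤ ck)
    (h : ∀ γ A : ℤ, IsCoprime γ (p : ℤ) → IsCoprime A (p : ℤ) →
      ‖Ck γ A‖ ≤ ck * (p : ℝ) ^ ((2 : ℝ) ^ (k - 1) - 1 / 2) *
        Real.sqrt (Int.gcd (p : ℤ) (γ - A))) :
    ∀ A B : ℤ, IsCoprime A (p : ℤ) → IsCoprime B (p : ℤ) →
      ‖∑ γ : (ZMod p)ˣ, Ck (((γ : ZMod p).val : ℕ) : ℤ) A *
          Ck (((γ : ZMod p).val : ℕ) : ℤ) B‖ ≤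
        2 * ck ^ 2 * (p : ℝ) ^ ((2 : ℝ) ^ k) := by
  intro A B hA hB
  have hp0 : (0 : ℝ) < p := by exact_mod_cast hp.pos
  set C : ℝ := ck * (p : ℝ) ^ ((2 : ℝ) ^ (k - 1) - 1 / 2) with hC
  have hC0 : 0 ≤ C := mul_nonneg hck (Real.rpow_nonneg hp0.le _)
  have hcop : ∀ γ : (ZMod p)ˣ, IsCoprime (((γ : ZMod p).val : ℕ) : ℤ) (p : ℤ) := by
    intro γ
    exact Nat.isCoprime_iff_coprime.mpr (ZMod.val_coe_unit_coprime γ)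
  have key : ∀ γ : (ZMod p)ˣ,
      ‖Ck (((γ : ZMod p).val : ℕ) : ℤ) A * Ck (((γ : ZMod p).val : ℕ) : ℤ) B‖ ≤
        C ^ 2 * ((((Int.gcd (p : ℤ) ((((γ : ZMod p).val : ℕ) : ℤ) - A)) : ℝ)
          + ((Int.gcd (p : ℤ) ((((γ : ZMod p).val : ℕ) : ℤ) - B)) : ℝ)) / 2) := by
    intro γ
    set v : ℤ := (((γ : ZMod p).val : ℕ) : ℤ)
    set a : ℝ := ((Int.gcd (p : ℤ) (v - A)) : ℝ)
    set b : ℝ := ((Int.gcd (p : ℤ) (v - B)) : ℝ)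
    have ha0 : (0 : ℝ) ≤ a := Nat.cast_nonneg _
    have hb0 : (0 : ℝ) ≤ b := Nat.cast_nonneg _
    have h1 := h v A (hcop γ) hA
    have h2 := h v B (hcop γ) hB
    have hsq : Real.sqrt a * Real.sqrt b ≤ (a + b) / 2 := by
      nlinarith [sq_nonneg (Real.sqrt a - Real.sqrt b), Real.sq_sqrt ha0, Real.sq_sqrt hb0,
        Real.sqrt_nonneg a, Real.sqrt_nonneg b]
    calc ‖Ck v A * Ck v B‖ = ‖Ck v A‖ * ‖Ck v B‖ := norm_mul _ _
      _ ≤ (C * Real.sqrt a) * (C * Real.sqrt b) := by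
          apply mul_le_mul h1 h2 (norm_nonneg _)
          exact mul_nonneg hC0 (Real.sqrt_nonneg _)
      _ = C ^ 2 * (Real.sqrt a * Real.sqrt b) := by ring
      _ ≤ C ^ 2 * ((a + b) / 2) := by
          apply mul_le_mul_of_nonneg_left hsq (sq_nonneg _)
  calc ‖∑ γ : (ZMod p)ˣ, Ck (((γ : ZMod p).val : ℕ) : ℤ) A *
          Ck (((γ : ZMod p).val : ℕ) : ℤ) B‖
      ≤ ∑ γ : (ZMod p)ˣ, ‖Ck (((γ : ZMod p).val : ℕ) : ℤ) A *
          Ck (((γ : ZMod p).val : ℕ) : ℤ) B‖ := norm_sum_le _ _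
    _ ≤ ∑ γ : (ZMod p)ˣ, C ^ 2 * ((((Int.gcd (p : ℤ) ((((γ : ZMod p).val : ℕ) : ℤ) - A)) : ℝ)
          + ((Int.gcd (p : ℤ) ((((γ : ZMod p).val : ℕ) : ℤ) - B)) : ℝ)) / 2) :=
        Finset.sum_le_sum fun γ _ => key γ
    _ = C ^ 2 / 2 * ((∑ γ : (ZMod p)ˣ, ((Int.gcd (p : ℤ) ((((γ : ZMod p).val : ℕ) : ℤ) - A)) : ℝ))
          + (∑ γ : (ZMod p)ˣ, ((Int.gcd (p : ℤ) ((((γ : ZMod p).val : ℕ) : ℤ) - B)) : ℝ))) := by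
        rw [← Finset.sum_add_distrib, Finset.mul_sum]
        apply Finset.sum_congr rfl
        intro γ _
        ring
    _ ≤ C ^ 2 / 2 * (2 * p + 2 * p) := by
        have hAsum := aux_sum_gcd_le p hp A
        have hBsum := aux_sum_gcd_le p hp B
        have hCC : (0 : ℝ) ≤ C ^ 2 / 2 := by positivity
        apply mul_le_mul_of_nonneg_left (add_le_add hAsum hBsum) hCC
    _ = 2 * ck ^ 2 * (p : ℝ) ^ ((2 : ℝ) ^ k) := by
        have hrw : ((p : ℝ) ^ ((2 : ℝ) ^ (k - 1) - 1 / 2)) ^ 2 * (p : ℝ)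
            = (p : ℝ) ^ ((2 : ℝ) ^ k) := by
          have e1 : ((p : ℝ) ^ ((2 : ℝ) ^ (k - 1) - 1 / 2)) ^ (2 : ℕ)
              = (p : ℝ) ^ (((2 : ℝ) ^ (k - 1) - 1 / 2) * 2) := by
            rw [← Real.rpow_natCast ((p : ℝ) ^ ((2 : ℝ) ^ (k - 1) - 1 / 2)) 2,
              ← Real.rpow_mul hp0.le]
            norm_num
          rw [e1, ← Real.rpow_add_one hp0.ne']
          congr 1
          have h2k : (2 : ℝ) ^ k = 2 * (2 : ℝ) ^ (k - 1) := by
            conv_lhs => rw [show k = (k - 1) + 1 from (Nat.succ_pred_eq_of_pos hk).symm]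
            rw [pow_succ]
            ring
          rw [h2k]
          ring
        rw [hC, mul_pow]
        calc (ck ^ 2 * ((p : ℝ) ^ ((2 : ℝ) ^ (k - 1) - 1 / 2)) ^ 2) / 2 * (2 * p + 2 * p)
            = 2 * ck ^ 2 * (((p : ℝ) ^ ((2 : ℝ) ^ (k - 1) - 1 / 2)) ^ 2 * p) := by ring
          _ = 2 * ck ^ 2 * (p : ℝ) ^ ((2 : ℝ) ^ k) := by rw [hrw]
end
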